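/- arXiv:1308.4251 — 2 statements merged into one kernel-verified Lean document; each statement's English description precedes it below -/
import Mathlib

section
/- Let $G$ be a connected graph of order $n \geq 3$. Then $rx_3(G) = 2$ if and only if $G = K_5$, or $G$ is a 2-connected graph of order 4, or $G$ has order 3. -/
open SimpleGraph

/-- An edge-coloring `c` is a `k`-rainbow coloring of `G` if every `k`-set of vertices
is contained in a rainbow tree: a subgraph of `G` that is a tree, contains the `k` vertices,
and whose edges receive pairwise distinct colors. -/
def IsRainbowColoring {V : Type*} [Fintype V] (G : SimpleGraph V) {α : Type*}
    (c : Sym2 V → α) (k : ℕ) : Prop :=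
  ∀ S : Finset V, S.card = k →
    ∃ T : G.Subgraph, (↑S : Set V) ⊆ T.verts ∧ T.coe.IsTree ∧ Set.InjOn c T.edgeSet

/-- The `k`-rainbow index of `G`: the minimum number of colors in a `k`-rainbow coloring. -/
noncomputable def rxk {V : Type*} [Fintype V] (G : SimpleGraph V) (k : ℕ) : ℕ :=
  sInf {q | ∃ c : Sym2 V → Fin q, IsRainbowColoring G c k}

/-- A graph is 2-connected if it has at least 3 vertices, is connected, and deleting any
single vertex leaves it connected. -/
def TwoConnected {V : Type*} [Fintype V] (G : SimpleGraph V) : Prop :=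
  3 ≤ Fintype.card V ∧ G.Connected ∧ ∀ v : V, (G.induce {w | w ≠ v}).Connected

/-!
With two colors a rainbow tree has at most three vertices, so a 2-coloring is 3-rainbow
exactly when any three vertices contain a center: one of them joined to the other two by
edges of different colors. For a non-edge `ab` every other vertex must be a center of
`{a, b}`; hence every vertex has at most one non-neighbour, and the colors of the edges `xa`,
`x ∉ {a, b}`, are pairwise distinct, so a non-edge leaves room for at most four vertices.
A triangle colored `p, p, q` forces `q ≠ p`, so there is no monochromatic triangle, which
excludes six or more vertices since `R(3, 3) = 6`. Conversely, `K₅` is colored by a pentagon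
and its complementary pentagram, a 2-connected graph on four vertices has a Hamiltonian
4-cycle, colored alternately, and a connected graph on three vertices is a path or a triangle.
-/

namespace SimpleGraph

variable {V α : Type*} {G : SimpleGraph V}

lemma Subgraph.natCard_edgeSet_coe (T : G.Subgraph) :
    Nat.card T.coe.edgeSet = T.edgeSet.ncard := by
  rw [← image_coe_edgeSet_coe, Set.ncard_image_of_injective _
    (Sym2.map.injective Subtype.val_injective), Nat.card_coe_set_eq]

lemma Subgraph.ncard_verts_le_of_injOn [Finite α] {T : G.Subgraph} (hT : T.coe.Connected)
    {c : Sym2 V → α} (hc : Set.InjOn c T.edgeSet) : T.verts.ncard ≤ Nat.card α + 1 :=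
  calc T.verts.ncard = Nat.card T.verts := (Nat.card_coe_set_eq _).symm
    _ ≤ Nat.card T.coe.edgeSet + 1 := hT.card_vert_le_card_edgeSet_add_one
    _ = T.edgeSet.ncard + 1 := by rw [T.natCard_edgeSet_coe]
    _ ≤ Nat.card α + 1 := by
      gcongr
      rw [← Set.ncard_univ]
      exact Set.ncard_le_ncard_of_injOn c (fun _ _ ↦ Set.mem_univ _) hc Set.finite_univ

lemma Subgraph.Connected.adj_adj_of_verts_eq {T : G.Subgraph} (hT : T.Connected) {u v w : V}
    (huv : u ≠ v) (huw : u ≠ w) (hvw : v ≠ w) (hverts : T.verts = {u, v, w}) :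
    (T.Adj u v ∧ T.Adj u w) ∨ (T.Adj v u ∧ T.Adj v w) ∨ (T.Adj w u ∧ T.Adj w v) := by
  have : Nontrivial T.verts := ⟨⟨⟨u, by simp [hverts]⟩, ⟨v, by simp [hverts]⟩, by simpa⟩⟩
  have neighbour : ∀ y ∈ ({u, v, w} : Set V), ∃ z ∈ ({u, v, w} : Set V), z ≠ y ∧ T.Adj y z := by
    intro y hy
    obtain ⟨z, hz⟩ := hT.preconnected.exists_adj_of_nontrivial ⟨y, hverts ▸ hy⟩
    exact ⟨z, hverts ▸ hz.snd_mem, hz.ne.symm, hz⟩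
  obtain ⟨a, ha, haw, hwa⟩ := neighbour w (by simp)
  simp only [Set.mem_insert_iff, Set.mem_singleton_iff] at ha
  rcases ha with rfl | rfl | rfl
  · obtain ⟨b, hb, hbv, hvb⟩ := neighbour v (by simp)
    simp only [Set.mem_insert_iff, Set.mem_singleton_iff] at hb
    rcases hb with rfl | rfl | rfl
    · exact .inl ⟨hvb.symm, hwa.symm⟩
    · exact absurd rfl hbv
    · exact .inr (.inr ⟨hwa, hvb.symm⟩)
  · obtain ⟨b, hb, hbu, hub⟩ := neighbour u (by simp)
    simp only [Set.mem_insert_iff, Set.mem_singleton_iff] at hb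
    rcases hb with rfl | rfl | rfl
    · exact absurd rfl hbu
    · exact .inr (.inl ⟨hub.symm, hwa.symm⟩)
    · exact .inr (.inr ⟨hub.symm, hwa⟩)
  · exact absurd rfl haw

end SimpleGraph

section Rainbow

variable {V α : Type*} {G : SimpleGraph V}

def IsRainbowCenter (G : SimpleGraph V) (c : Sym2 V → α) (x u v : V) : Prop :=
  G.Adj x u ∧ G.Adj x v ∧ c s(x, u) ≠ c s(x, v)

lemma IsRainbowCenter.exists_isTree {c : Sym2 V → α} {x u v : V}
    (h : IsRainbowCenter G c x u v) :
    ∃ T : G.Subgraph, T.verts = {u, x, v} ∧ T.coe.IsTree ∧ Set.InjOn c T.edgeSet := by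
  obtain ⟨hxu, hxv, hc⟩ := h
  have huv : u ≠ v := by rintro rfl; exact hc rfl
  set T := G.subgraphOfAdj hxu ⊔ G.subgraphOfAdj hxv
  have hverts : T.verts = {u, x, v} := by
    simp [T, Subgraph.verts_sup, Set.insert_comm, Set.pair_comm]
  have hedges : T.edgeSet = {s(x, u), s(x, v)} := by
    simp [T, Subgraph.edgeSet_sup, Set.pair_comm]
  have hconn : T.Connected := Subgraph.connected_sup
    (Subgraph.subgraphOfAdj_connected hxu).preconnected
    (Subgraph.subgraphOfAdj_connected hxv).preconnected ⟨x, by simp⟩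
  refine ⟨T, hverts, ?_, ?_⟩
  · have : Finite T.verts := by rw [hverts]; exact Set.toFinite _
    refine isTree_iff_connected_and_card.mpr ⟨hconn.coe, ?_⟩
    rw [T.natCard_edgeSet_coe, Nat.card_coe_set_eq, hverts, hedges,
      Set.ncard_pair (fun h ↦ hc (congrArg c h)),
      Set.ncard_insert_of_notMem (by simp [hxu.ne.symm, huv]), Set.ncard_pair hxv.ne]
  · rw [hedges, Set.injOn_pair]
    exact fun h ↦ absurd h hc

lemma IsRainbowCenter.exists_isTree_of_subset {c : Sym2 V → α} {x u v : V}
    (h : IsRainbowCenter G c x u v) {S : Set V} (hS : S ⊆ {u, x, v}) :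
    ∃ T : G.Subgraph, S ⊆ T.verts ∧ T.coe.IsTree ∧ Set.InjOn c T.edgeSet := by
  obtain ⟨T, hverts, hT, hc⟩ := h.exists_isTree
  exact ⟨T, hverts ▸ hS, hT, hc⟩

lemma SimpleGraph.Subgraph.isRainbowCenter_of_adj {T : G.Subgraph} {c : Sym2 V → α}
    (hc : Set.InjOn c T.edgeSet) {x u v : V} (hu : T.Adj x u) (hv : T.Adj x v) (huv : u ≠ v) :
    IsRainbowCenter G c x u v :=
  ⟨hu.adj_sub, hv.adj_sub, fun h ↦ huv (Sym2.congr_right.mp (hc hu hv h))⟩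

lemma SimpleGraph.Iso.isRainbowCenter_comp_iff {W : Type*} {H : SimpleGraph W} (e : G ≃g H)
    {c : Sym2 W → α} {x u v : V} :
    IsRainbowCenter G (c ∘ Sym2.map e) x u v ↔ IsRainbowCenter H c (e x) (e u) (e v) := by
  simp [IsRainbowCenter, e.map_adj_iff]

section Fintype

variable [Fintype V] {c : Sym2 V → α}

lemma IsRainbowColoring.le_card_add_one [Finite α] {k : ℕ} (h : IsRainbowColoring G c k)
    (hk : k ≤ Fintype.card V) : k ≤ Nat.card α + 1 := by
  obtain ⟨S, -, hS⟩ := Finset.exists_subset_card_eq (s := Finset.univ) (by simpa using hk)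
  obtain ⟨T, hST, hT, hc⟩ := h S hS
  calc k = (S : Set V).ncard := by rw [Set.ncard_coe_finset, hS]
    _ ≤ T.verts.ncard := Set.ncard_le_ncard hST
    _ ≤ Nat.card α + 1 := Subgraph.ncard_verts_le_of_injOn hT.connected hc

lemma rxk_three_eq_two_iff (hV : 3 ≤ Fintype.card V) :
    rxk G 3 = 2 ↔ ∃ c : Sym2 V → Fin 2, IsRainbowColoring G c 3 := by
  refine ⟨fun h ↦ ?_, fun h ↦ le_antisymm (Nat.sInf_le h) (le_csInf ⟨2, h⟩ ?_)⟩
  · exact h ▸ Nat.sInf_mem (Nat.nonempty_of_pos_sInf (by change 0 < rxk G 3; omega))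
  · rintro q ⟨c, hc⟩
    simpa using hc.le_card_add_one hV

lemma IsRainbowColoring.isRainbowCenter [Finite α] (hα : Nat.card α ≤ 2)
    (h : IsRainbowColoring G c 3) {u v w : V} (huv : u ≠ v) (huw : u ≠ w) (hvw : v ≠ w) :
    IsRainbowCenter G c u v w ∨ IsRainbowCenter G c v u w ∨ IsRainbowCenter G c w u v := by
  classical
  obtain ⟨T, hST, hT, hc⟩ := h {u, v, w} (Finset.card_eq_three.mpr ⟨u, v, w, huv, huw, hvw, rfl⟩)
  push_cast at hST
  have hverts : T.verts = {u, v, w} := by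
    refine (Set.eq_of_subset_of_ncard_le hST ?_ (Set.toFinite _)).symm
    rw [Set.ncard_eq_three.mpr ⟨u, v, w, huv, huw, hvw, rfl⟩]
    exact (Subgraph.ncard_verts_le_of_injOn hT.connected hc).trans (by omega)
  rcases (Subgraph.connected_iff'.mpr hT.connected).adj_adj_of_verts_eq huv huw hvw hverts with
    ⟨h₁, h₂⟩ | ⟨h₁, h₂⟩ | ⟨h₁, h₂⟩
  · exact .inl (Subgraph.isRainbowCenter_of_adj hc h₁ h₂ hvw)
  · exact .inr (.inl (Subgraph.isRainbowCenter_of_adj hc h₁ h₂ huw))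
  · exact .inr (.inr (Subgraph.isRainbowCenter_of_adj hc h₁ h₂ huv))

lemma isRainbowColoring_of_isRainbowCenter
    (h : ∀ u v w : V, u ≠ v → u ≠ w → v ≠ w →
      IsRainbowCenter G c u v w ∨ IsRainbowCenter G c v u w ∨ IsRainbowCenter G c w u v) :
    IsRainbowColoring G c 3 := by
  classical
  intro S hS
  obtain ⟨u, v, w, huv, huw, hvw, rfl⟩ := Finset.card_eq_three.mp hS
  push_cast
  rcases h u v w huv huw hvw with h | h | h
  · exact h.exists_isTree_of_subset (by rw [Set.insert_comm])
  · exact h.exists_isTree_of_subset subset_rfl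
  · exact h.exists_isTree_of_subset (by rw [Set.pair_comm])

lemma IsRainbowColoring.comp_iso {W : Type*} [Fintype W] {H : SimpleGraph W} [Finite α]
    (hα : Nat.card α ≤ 2) {c : Sym2 W → α} (h : IsRainbowColoring H c 3) (e : G ≃g H) :
    IsRainbowColoring G (c ∘ Sym2.map e) 3 :=
  isRainbowColoring_of_isRainbowCenter fun u v w huv huw hvw ↦ by
    simpa only [e.isRainbowCenter_comp_iff] using h.isRainbowCenter hα
      (e.injective.ne huv) (e.injective.ne huw) (e.injective.ne hvw)

end Fintype

lemma exists_monochromatic_triangle [Fintype V] (c : Sym2 V → Fin 2) (hV : 6 ≤ Fintype.card V) :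
    ∃ a x y : V, a ≠ x ∧ a ≠ y ∧ x ≠ y ∧ c s(x, a) = c s(y, a) ∧ c s(x, y) = c s(x, a) := by
  classical
  obtain ⟨a⟩ : Nonempty V := Fintype.card_pos_iff.mp (by omega)
  obtain ⟨γ, -, hγ⟩ := Finset.exists_lt_card_fiber_of_mul_lt_card_of_maps_to
    (s := Finset.univ.erase a) (t := Finset.univ) (f := fun x ↦ c s(x, a)) (n := 2)
    (fun _ _ ↦ Finset.mem_univ _)
    (by simp only [Finset.card_erase_of_mem (Finset.mem_univ a), Finset.card_univ,
      Fintype.card_fin]; omega)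
  obtain ⟨S, hS, hS3⟩ := Finset.exists_subset_card_eq hγ
  obtain ⟨x, y, z, hxy, hxz, hyz, rfl⟩ := Finset.card_eq_three.mp hS3
  have hcol : ∀ t ∈ ({x, y, z} : Finset V), a ≠ t ∧ c s(t, a) = γ := by
    intro t ht
    have := hS ht
    simp only [Finset.mem_filter, Finset.mem_erase] at this
    exact ⟨this.1.1.symm, this.2⟩
  obtain ⟨hax, hx⟩ := hcol x (by simp)
  obtain ⟨hay, hy⟩ := hcol y (by simp)
  obtain ⟨haz, hz⟩ := hcol z (by simp)
  by_cases hxy' : c s(x, y) = γ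
  · exact ⟨a, x, y, hax, hay, hxy, hx.trans hy.symm, hxy'.trans hx.symm⟩
  by_cases hxz' : c s(x, z) = γ
  · exact ⟨a, x, z, hax, haz, hxz, hx.trans hz.symm, hxz'.trans hx.symm⟩
  by_cases hyz' : c s(y, z) = γ
  · exact ⟨a, y, z, hay, haz, hyz, hy.trans hz.symm, hyz'.trans hy.symm⟩
  refine ⟨z, x, y, hxz.symm, hyz.symm, hxy, ?_, ?_⟩ <;> omega

section TwoColors

variable [Fintype V] {c : Sym2 V → Fin 2}

lemma IsRainbowColoring.isRainbowCenter_of_not_adj (h : IsRainbowColoring G c 3) {a b x : V}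
    (hab : a ≠ b) (hxa : x ≠ a) (hxb : x ≠ b) (hnab : ¬G.Adj a b) :
    IsRainbowCenter G c x a b := by
  rcases h.isRainbowCenter (by simp) hab hxa.symm hxb.symm with h | h | h
  · exact absurd h.1 hnab
  · exact absurd h.1.symm hnab
  · exact h

lemma IsRainbowColoring.adj_of_not_adj (h : IsRainbowColoring G c 3) {x a b : V} (hxa : x ≠ a)
    (hxb : x ≠ b) (hab : a ≠ b) (hnxa : ¬G.Adj x a) : G.Adj x b :=
  (h.isRainbowCenter_of_not_adj hxa hxb.symm hab.symm hnxa).1.symm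

lemma IsRainbowColoring.ne_of_eq (h : IsRainbowColoring G c 3) {a x y : V} (hax : a ≠ x)
    (hay : a ≠ y) (hxy : x ≠ y) (hc : c s(x, a) = c s(y, a)) : c s(x, y) ≠ c s(x, a) := by
  rcases h.isRainbowCenter (by simp) hax hay hxy with h | h | h
  · rw [Sym2.eq_swap (a := x), Sym2.eq_swap (a := y)] at hc
    exact absurd hc h.2.2
  · exact h.2.2.symm
  · rw [Sym2.eq_swap, hc]
    exact h.2.2.symm

lemma IsRainbowColoring.injOn_of_not_adj (h : IsRainbowColoring G c 3) {a b : V} (hab : a ≠ b)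
    (hnab : ¬G.Adj a b) : Set.InjOn (fun x ↦ c s(x, a)) {a, b}ᶜ := by
  intro x hx y hy hxya
  simp only [Set.mem_compl_iff, Set.mem_insert_iff, Set.mem_singleton_iff, not_or] at hx hy hxya
  by_contra hxy
  -- otherwise `c s(x, a)`, `c s(x, b)` and `c s(x, y)` would be three distinct colors
  have hxab := (h.isRainbowCenter_of_not_adj hab hx.1 hx.2 hnab).2.2
  have hyab := (h.isRainbowCenter_of_not_adj hab hy.1 hy.2 hnab).2.2
  have hxyb : c s(x, b) = c s(y, b) := by omega
  have ha := h.ne_of_eq (Ne.symm hx.1) (Ne.symm hy.1) hxy hxya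
  have hb := h.ne_of_eq (Ne.symm hx.2) (Ne.symm hy.2) hxy hxyb
  omega

lemma IsRainbowColoring.adj_of_five_le_card (h : IsRainbowColoring G c 3)
    (hV : 5 ≤ Fintype.card V) {a b : V} (hab : a ≠ b) : G.Adj a b := by
  classical
  by_contra hnab
  have := Finset.card_le_card_of_injOn (s := ({a, b} : Finset V)ᶜ) (t := Finset.univ) _
    (fun _ _ ↦ Finset.mem_univ _) (by push_cast; exact h.injOn_of_not_adj hab hnab)
  rw [Finset.card_compl, Finset.card_pair hab, Finset.card_univ, Fintype.card_fin] at this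
  omega

lemma IsRainbowColoring.card_le_five (h : IsRainbowColoring G c 3) : Fintype.card V ≤ 5 := by
  by_contra! hV
  obtain ⟨a, x, y, hax, hay, hxy, hc, hc'⟩ := exists_monochromatic_triangle c hV
  exact h.ne_of_eq hax hay hxy hc hc'

end TwoColors

section SmallOrder

variable [Fintype V]

lemma exists_ne_ne_ne (hV : 4 ≤ Fintype.card V) (a b c : V) : ∃ d, d ≠ a ∧ d ≠ b ∧ d ≠ c := by
  classical
  obtain ⟨d, -, hd⟩ := Finset.exists_mem_notMem_of_card_lt_card
    (s := {a, b, c}) (t := Finset.univ) (Finset.card_le_three.trans_lt (by simpa))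
  simp only [Finset.mem_insert, Finset.mem_singleton, not_or] at hd
  exact ⟨d, hd⟩

lemma eq_or_eq_or_eq_or_eq_of_card_eq_four (hV : Fintype.card V = 4) {a b c d : V} (hab : a ≠ b)
    (hac : a ≠ c) (had : a ≠ d) (hbc : b ≠ c) (hbd : b ≠ d) (hcd : c ≠ d) (x : V) :
    x = a ∨ x = b ∨ x = c ∨ x = d := by
  classical
  by_contra! hx
  obtain ⟨hxa, hxb, hxc, hxd⟩ := hx
  have := Finset.card_le_univ ({x, a, b, c, d} : Finset V)
  rw [Finset.card_insert_of_notMem (by simp [*]), Finset.card_insert_of_notMem (by simp [*]),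
    Finset.card_insert_of_notMem (by simp [*]), Finset.card_pair hcd, hV] at this
  omega

lemma twoConnected_of_card_eq_four (hG : G.Connected) (hV : Fintype.card V = 4)
    (hG' : ∀ ⦃x a b : V⦄, x ≠ a → x ≠ b → a ≠ b → ¬G.Adj x a → G.Adj x b) :
    TwoConnected G := by
  refine ⟨by omega, hG, fun v ↦ ?_⟩
  obtain ⟨w, hwv, -, -⟩ := exists_ne_ne_ne hV.ge v v v
  refine (connected_iff _).mpr ⟨fun ⟨p, hp⟩ ⟨q, hq⟩ ↦ ?_, ⟨⟨w, hwv⟩⟩⟩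
  by_cases hpq : p = q
  · subst hpq; rfl
  by_cases hadj : G.Adj p q
  · exact Adj.reachable (by simpa using hadj)
  obtain ⟨z, hzv, hzp, hzq⟩ := exists_ne_ne_ne hV.ge v p q
  have hpz : (G.induce {w | w ≠ v}).Adj ⟨p, hp⟩ ⟨z, hzv⟩ := by
    simpa using hG' hpq hzp.symm hzq.symm hadj
  have hzq : (G.induce {w | w ≠ v}).Adj ⟨z, hzv⟩ ⟨q, hq⟩ := by
    simpa using (hG' (Ne.symm hpq) hzq.symm hzp.symm (fun h ↦ hadj h.symm)).symm
  exact hpz.reachable.trans hzq.reachable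

lemma TwoConnected.adj_of_not_adj (h : TwoConnected G) (hV : Fintype.card V = 4) {x a b : V}
    (hxa : x ≠ a) (hxb : x ≠ b) (hab : a ≠ b) (hnxa : ¬G.Adj x a) : G.Adj x b := by
  by_contra hnxb
  obtain ⟨d, hdx, hda, hdb⟩ := exists_ne_ne_ne hV.ge x a b
  have : Nontrivial {w | w ≠ d} := ⟨⟨⟨x, hdx.symm⟩, ⟨a, hda.symm⟩, by simpa⟩⟩
  obtain ⟨⟨y, hyd⟩, hxy⟩ := (h.2.2 d).preconnected.exists_adj_of_nontrivial ⟨x, hdx.symm⟩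
  simp only [comap_adj, Function.Embedding.coe_subtype] at hxy
  rcases eq_or_eq_or_eq_or_eq_of_card_eq_four hV hxa hxb hdx.symm hab hda.symm hdb.symm y with
    rfl | rfl | rfl | rfl
  · exact hxy.ne rfl
  · exact hnxa hxy
  · exact hnxb hxy
  · exact hyd rfl

lemma exists_cycle_of_card_eq_four (hV : Fintype.card V = 4)
    (hG : ∀ ⦃x a b : V⦄, x ≠ a → x ≠ b → a ≠ b → ¬G.Adj x a → G.Adj x b) :
    ∃ a b c d : V, a ≠ b ∧ a ≠ c ∧ a ≠ d ∧ b ≠ c ∧ b ≠ d ∧ c ≠ d ∧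
      G.Adj a b ∧ G.Adj b c ∧ G.Adj c d ∧ G.Adj d a := by
  classical
  obtain ⟨x, y, hxy, hcomplete⟩ :
      ∃ x y : V, x ≠ y ∧ (G.Adj x y → ∀ u v : V, u ≠ v → G.Adj u v) := by
    by_cases h : ∃ x y : V, x ≠ y ∧ ¬G.Adj x y
    · obtain ⟨x, y, hxy, hnxy⟩ := h
      exact ⟨x, y, hxy, fun h ↦ absurd h hnxy⟩
    · push Not at h
      obtain ⟨x, y, hxy⟩ := Fintype.exists_pair_of_one_lt_card (by omega : 1 < Fintype.card V)
      exact ⟨x, y, hxy, fun _ ↦ h⟩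
  have cross : ∀ u, u ≠ x → u ≠ y → G.Adj x u ∧ G.Adj y u := by
    intro u hux huy
    by_cases hadj : G.Adj x y
    · exact ⟨hcomplete hadj x u hux.symm, hcomplete hadj y u huy.symm⟩
    · exact ⟨hG hxy hux.symm huy.symm hadj, hG hxy.symm huy.symm hux.symm (fun h ↦ hadj h.symm)⟩
  obtain ⟨u, v, huv, huniv⟩ := Finset.card_eq_two.mp (by
    rw [Finset.card_sdiff_of_subset (Finset.subset_univ _), Finset.card_univ, hV,
      Finset.card_pair hxy] : (Finset.univ \ {x, y} : Finset V).card = 2)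
  have hu : u ∈ Finset.univ \ {x, y} := by simp [huniv]
  have hv : v ∈ Finset.univ \ {x, y} := by simp [huniv]
  simp only [Finset.mem_sdiff, Finset.mem_univ, Finset.mem_insert, Finset.mem_singleton,
    true_and, not_or] at hu hv
  exact ⟨x, u, y, v, Ne.symm hu.1, hxy, Ne.symm hv.1, hu.2, huv, Ne.symm hv.2,
    (cross u hu.1 hu.2).1, (cross u hu.1 hu.2).2.symm, (cross v hv.1 hv.2).2,
    (cross v hv.1 hv.2).1.symm⟩

/-- Color the cycle `a b c d` alternately: any three vertices are a cycle vertex and its two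
cycle neighbours. -/
lemma exists_isRainbowColoring_of_cycle (hV : Fintype.card V = 4) {a b c d : V} (hab : a ≠ b)
    (hac : a ≠ c) (had : a ≠ d) (hbc : b ≠ c) (hbd : b ≠ d) (hcd : c ≠ d) (h₁ : G.Adj a b)
    (h₂ : G.Adj b c) (h₃ : G.Adj c d) (h₄ : G.Adj d a) :
    ∃ col : Sym2 V → Fin 2, IsRainbowColoring G col 3 := by
  classical
  let col : Sym2 V → Fin 2 := fun e ↦ if e = s(a, b) ∨ e = s(c, d) then 0 else 1
  have hab' : col s(a, b) = 0 := if_pos (.inl rfl)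
  have hcd' : col s(c, d) = 0 := if_pos (.inr rfl)
  have hbc' : col s(b, c) = 1 := if_neg (by simp only [Sym2.eq_iff]; grind)
  have hda' : col s(d, a) = 1 := if_neg (by simp only [Sym2.eq_iff]; grind)
  refine ⟨col, fun S hS ↦ ?_⟩
  obtain ⟨w, -, hw⟩ := Finset.exists_mem_notMem_of_card_lt_card
    (s := S) (t := Finset.univ) (by simp [hS, hV])
  have cover := eq_or_eq_or_eq_or_eq_of_card_eq_four hV hab hac had hbc hbd hcd
  have hSw : ∀ s ∈ S, s ≠ w := fun s hs h ↦ hw (h ▸ hs)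
  rcases cover w with rfl | rfl | rfl | rfl
  · refine IsRainbowCenter.exists_isTree_of_subset (x := c) ⟨h₂.symm, h₃, ?_⟩ fun s hs ↦ ?_
    · rw [Sym2.eq_swap, hbc', hcd']; decide
    · have := hSw s hs; rcases cover s with rfl | rfl | rfl | rfl <;> simp_all
  · refine IsRainbowCenter.exists_isTree_of_subset (x := d) ⟨h₃.symm, h₄, ?_⟩ fun s hs ↦ ?_
    · rw [Sym2.eq_swap, hcd', hda']; decide
    · have := hSw s hs; rcases cover s with rfl | rfl | rfl | rfl <;> simp_all
  · refine IsRainbowCenter.exists_isTree_of_subset (x := a) ⟨h₄.symm, h₁, ?_⟩ fun s hs ↦ ?_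
    · rw [Sym2.eq_swap, hda', hab']; decide
    · have := hSw s hs; rcases cover s with rfl | rfl | rfl | rfl <;> simp_all
  · refine IsRainbowCenter.exists_isTree_of_subset (x := b) ⟨h₁.symm, h₂, ?_⟩ fun s hs ↦ ?_
    · rw [Sym2.eq_swap, hab', hbc']; decide
    · have := hSw s hs; rcases cover s with rfl | rfl | rfl | rfl <;> simp_all

lemma exists_isRainbowColoring_of_adj_adj {x u v : V} (hxu : G.Adj x u) (hxv : G.Adj x v)
    (huv : u ≠ v) (huniv : ∀ y, y = u ∨ y = x ∨ y = v) :
    ∃ c : Sym2 V → Fin 2, IsRainbowColoring G c 3 := by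
  classical
  have hc : IsRainbowCenter G (fun e ↦ if e = s(x, u) then (0 : Fin 2) else 1) x u v :=
    ⟨hxu, hxv, by simp [huv.symm, hxu.ne]⟩
  exact ⟨_, fun S _ ↦ hc.exists_isTree_of_subset (S := S) fun y _ ↦ by simpa using huniv y⟩

lemma exists_isRainbowColoring_of_card_eq_three (hG : G.Connected) (hV : Fintype.card V = 3) :
    ∃ c : Sym2 V → Fin 2, IsRainbowColoring G c 3 := by
  classical
  obtain ⟨u, v, w, huv, huw, hvw, huniv⟩ :=
    Finset.card_eq_three.mp (by simpa using hV : (Finset.univ : Finset V).card = 3)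
  have cover : ∀ y, y = u ∨ y = v ∨ y = w := fun y ↦ by simpa [huniv] using Finset.mem_univ y
  have hverts : (⊤ : G.Subgraph).verts = {u, v, w} := by
    ext y
    simpa using cover y
  have hconn : (⊤ : G.Subgraph).Connected :=
    Subgraph.connected_iff'.mpr (Subgraph.topIso.connected_iff.mpr hG)
  rcases hconn.adj_adj_of_verts_eq huv huw hvw hverts with ⟨h₁, h₂⟩ | ⟨h₁, h₂⟩ | ⟨h₁, h₂⟩
  · exact exists_isRainbowColoring_of_adj_adj h₁.adj_sub h₂.adj_sub hvw
      fun y ↦ by have := cover y; tauto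
  · exact exists_isRainbowColoring_of_adj_adj h₁.adj_sub h₂.adj_sub huw
      fun y ↦ by have := cover y; tauto
  · exact exists_isRainbowColoring_of_adj_adj h₁.adj_sub h₂.adj_sub huv
      fun y ↦ by have := cover y; tauto

end SmallOrder

end Rainbow

/-- The edges `i (i + 1)` of the pentagon get color `0`, the diagonals color `1`. -/
def pentagonColoring : Sym2 (Fin 5) → Fin 2 :=
  Sym2.lift ⟨fun i j ↦ if i - j = 1 ∨ j - i = 1 then 0 else 1, by decide⟩

lemma isRainbowColoring_pentagonColoring :
    IsRainbowColoring (completeGraph (Fin 5)) pentagonColoring 3 :=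
  isRainbowColoring_of_isRainbowCenter (by unfold IsRainbowCenter pentagonColoring; decide)

theorem stmt_7 {V : Type*} [Fintype V] (G : SimpleGraph V) (hG : G.Connected)
    (hn : 3 ≤ Fintype.card V) :
    rxk G 3 = 2 ↔
      Nonempty (G ≃g (completeGraph (Fin 5))) ∨
      (Fintype.card V = 4 ∧ TwoConnected G) ∨
      Fintype.card V = 3 := by
  rw [rxk_three_eq_two_iff hn]
  constructor
  · rintro ⟨c, hc⟩
    have := hc.card_le_five
    obtain h3 | h4 | h5 : Fintype.card V = 3 ∨ Fintype.card V = 4 ∨ Fintype.card V = 5 := by omega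
    · exact .inr (.inr h3)
    · exact .inr (.inl ⟨h4, twoConnected_of_card_eq_four hG h4 fun _ _ _ ↦ hc.adj_of_not_adj⟩)
    · have hGtop : G = ⊤ := by
        ext a b
        exact ⟨Adj.ne, hc.adj_of_five_le_card h5.ge⟩
      subst hGtop
      exact .inl ⟨Iso.completeGraph (Fintype.equivFinOfCardEq h5)⟩
  · rintro (he | ⟨h4, h2⟩ | h3)
    · exact ⟨_, isRainbowColoring_pentagonColoring.comp_iso (by simp) he.some⟩
    · obtain ⟨a, b, c, d, hab, hac, had, hbc, hbd, hcd, h₁, h₂, h₃, h₄⟩ :=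
        exists_cycle_of_card_eq_four h4 fun _ _ _ ↦ h2.adj_of_not_adj h4
      exact exists_isRainbowColoring_of_cycle h4 hab hac had hbc hbd hcd h₁ h₂ h₃ h₄
    · exact exists_isRainbowColoring_of_card_eq_three hG h3
end

section
/- Let $G$ be a connected graph and let $G'$ be a connected graph obtained from $G$ by contracting some edges of $G$. Then $rx_3(G) \leq rx_3(G') + |V(G)| - |V(G')|$. -/
open SimpleGraph

/-!
Fix a spanning tree in every fibre of the contraction map `f`; together these trees have
`|V| - |V'|` edges. Colour each of them with a colour of its own, and every other edge `e` of `G`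
with the colour of its image `f e` in an optimal colouring of `G'`. Given three vertices of `G`,
take a rainbow tree of `G'` through their images (when `G'` has at most two vertices, `G'` itself
will do, having at most one edge). The fibre trees over its vertices, together with one lift of
each of its edges, form a connected subgraph of `G` whose edges have distinct colours; any spanning
tree of it is a rainbow tree through the three vertices.
-/

namespace SimpleGraph

theorem Preconnected.of_quotient {W W' : Type*} {Γ : SimpleGraph W} {Γ' : SimpleGraph W'}
    (g : W → W') (hfib : ∀ a b, g a = g b → Γ.Reachable a b)
    (hadj : ∀ x y, Γ'.Adj x y → ∃ a b, g a = x ∧ g b = y ∧ Γ.Reachable a b)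
    (h : Γ'.Preconnected) : Γ.Preconnected := by
  suffices key : ∀ {x y} (p : Γ'.Walk x y) a b, g a = x → g b = y → Γ.Reachable a b from
    fun a b => key (h (g a) (g b)).some a b rfl rfl
  intro x y p
  induction p with
  | nil => exact fun a b ha hb => hfib a b (ha.trans hb.symm)
  | cons hxy _ ih =>
    intro a b ha hb
    obtain ⟨a', b', ha', hb', hab'⟩ := hadj _ _ hxy
    exact (hfib a a' (ha.trans ha'.symm)).trans (hab'.trans (ih b' b hb' hb))

theorem edgeSet_subsingleton_of_card_le_two {V : Type*} [Fintype V] (G : SimpleGraph V)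
    (h : Fintype.card V ≤ 2) : G.edgeSet.Subsingleton := by
  classical
  have : Subsingleton {e : Sym2 V // ¬e.IsDiag} := by
    rw [← Fintype.card_le_one_iff_subsingleton, Sym2.card_subtype_not_diag]
    interval_cases Fintype.card V <;> decide
  intro e he e' he'
  exact congrArg Subtype.val (Subsingleton.elim
    (⟨e, G.not_isDiag_of_mem_edgeSet he⟩ : {e : Sym2 V // ¬e.IsDiag})
    ⟨e', G.not_isDiag_of_mem_edgeSet he'⟩)

namespace Subgraph

variable {V : Type*} {G : SimpleGraph V}

def ofLEInduce (s : Set V) (H : SimpleGraph s) (hH : H ≤ G.induce s) : G.Subgraph where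
  verts := s
  Adj a b := ∃ (ha : a ∈ s) (hb : b ∈ s), H.Adj ⟨a, ha⟩ ⟨b, hb⟩
  adj_sub := fun ⟨_, _, h⟩ => hH h
  edge_vert := fun ⟨ha, _, _⟩ => ha
  symm := ⟨fun _ _ ⟨ha, hb, h⟩ => ⟨hb, ha, h.symm⟩⟩

theorem coe_ofLEInduce (s : Set V) (H : SimpleGraph s) (hH : H ≤ G.induce s) :
    (ofLEInduce s H hH).coe = (H : SimpleGraph (ofLEInduce s H hH).verts) := by
  ext ⟨a, ha⟩ ⟨b, hb⟩
  exact ⟨fun ⟨_, _, h⟩ => h, fun h => ⟨ha, hb, h⟩⟩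

theorem connected_top (hG : G.Connected) : (⊤ : G.Subgraph).Connected :=
  ⟨topIso.connected_iff.mpr hG⟩

theorem Connected.exists_isTree_le {H : G.Subgraph} (hH : H.Connected) :
    ∃ T ≤ H, T.verts = H.verts ∧ T.coe.IsTree := by
  obtain ⟨T, hTH, hT⟩ := hH.coe.exists_isTree_le
  have hTG : T ≤ G.induce H.verts := fun _ _ h => H.adj_sub (hTH h)
  refine ⟨ofLEInduce H.verts T hTG, ⟨subset_rfl, ?_⟩, rfl, ?_⟩
  · rintro _ _ ⟨_, _, h⟩
    exact hTH h
  · rwa [coe_ofLEInduce]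

theorem ncard_edgeSet_add_one_of_isTree [Finite V] {T : G.Subgraph} (hT : T.coe.IsTree) :
    T.edgeSet.ncard + 1 = T.verts.ncard := by
  rw [← image_coe_edgeSet_coe,
    Set.ncard_image_of_injective _ (Sym2.map.injective Subtype.val_injective)]
  exact (isTree_iff_connected_and_card.mp hT).2

end Subgraph

end SimpleGraph

section Rainbow

variable {V α : Type*} [Fintype V] {G : SimpleGraph V} {k : ℕ}

theorem isRainbowColoring_of_connected {c : Sym2 V → α}
    (h : ∀ S : Finset V, S.card = k →
      ∃ H : G.Subgraph, ↑S ⊆ H.verts ∧ H.Connected ∧ Set.InjOn c H.edgeSet) :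
    IsRainbowColoring G c k := by
  intro S hS
  obtain ⟨H, hSH, hH, hc⟩ := h S hS
  obtain ⟨T, hTH, hTverts, hT⟩ := hH.exists_isTree_le
  exact ⟨T, hTverts ▸ hSH, hT, hc.mono (Subgraph.edgeSet_mono hTH)⟩

theorem IsRainbowColoring.comp {β : Type*} {c : Sym2 V → α} (hc : IsRainbowColoring G c k)
    {g : α → β} (hg : g.Injective) : IsRainbowColoring G (g ∘ c) k :=
  fun S hS => (hc S hS).imp fun _ ⟨hST, hT, hcT⟩ =>
    ⟨hST, hT, hg.injOn.comp hcT (Set.mapsTo_univ _ _)⟩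

theorem rxk_le_card [Finite α] {c : Sym2 V → α} (hc : IsRainbowColoring G c k) :
    rxk G k ≤ Nat.card α := by
  have := Fintype.ofFinite α
  rw [Nat.card_eq_fintype_card]
  exact Nat.sInf_le ⟨_, hc.comp (Fintype.equivFin α).injective⟩

theorem SimpleGraph.Connected.exists_isRainbowColoring_rxk (hG : G.Connected) :
    ∃ c : Sym2 V → Fin (rxk G k), IsRainbowColoring G c k := by
  refine Nat.sInf_mem (s := {q | ∃ c : Sym2 V → Fin q, IsRainbowColoring G c k})
    ⟨_, Fintype.equivFin (Sym2 V), isRainbowColoring_of_connected fun _ _ => ?_⟩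
  exact ⟨⊤, fun _ _ => trivial, Subgraph.connected_top hG,
    (Fintype.equivFin _).injective.injOn⟩

theorem IsRainbowColoring.exists_connected_of_card_le_three (hG : G.Connected)
    {c : Sym2 V → α} (hc : IsRainbowColoring G c 3) {S : Finset V} (hS : S.card ≤ 3) :
    ∃ H : G.Subgraph, ↑S ⊆ H.verts ∧ H.Connected ∧ Set.InjOn c H.edgeSet := by
  by_cases hV : 3 ≤ Fintype.card V
  · obtain ⟨S', hSS', -, hS'⟩ :=
      Finset.exists_subsuperset_card_eq (Finset.subset_univ S) hS (by rwa [Finset.card_univ])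
    obtain ⟨T, hS'T, hT, hcT⟩ := hc S' hS'
    exact ⟨T, (Finset.coe_subset.mpr hSS').trans hS'T, Subgraph.connected_iff'.mpr hT.connected,
      hcT⟩
  · refine ⟨⊤, fun _ _ => trivial, Subgraph.connected_top hG, ?_⟩
    rw [Subgraph.edgeSet_top]
    exact (G.edgeSet_subsingleton_of_card_le_two (by omega)).injOn c

end Rainbow

section Contraction

variable {V V' α : Type*} {G : SimpleGraph V} {G' : SimpleGraph V'} {f : V → V'}

theorem exists_adj_map_eq
    (hlift : ∀ x y, G'.Adj x y → ∃ a b, f a = x ∧ f b = y ∧ G.Adj a b) {e : Sym2 V'}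
    (he : e ∈ G'.edgeSet) : ∃ a b, G.Adj a b ∧ s(f a, f b) = e := by
  induction e using Sym2.ind with
  | _ x y =>
    obtain ⟨a, b, rfl, rfl, hab⟩ := hlift x y he
    exact ⟨a, b, hab, rfl⟩

theorem exists_fiber_trees (hfib : ∀ x, (G.induce (f ⁻¹' {x})).Connected) :
    ∃ T : V' → G.Subgraph, ∀ x, (T x).verts = f ⁻¹' {x} ∧ (T x).coe.IsTree := by
  choose T _ hTverts hT using fun x => (connected_induce_iff.mp (hfib x)).exists_isTree_le
  exact ⟨T, fun x => ⟨hTverts x, hT x⟩⟩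

theorem ncard_edgeSet_iSup_add_card_le [Fintype V] [Fintype V'] {T : V' → G.Subgraph}
    (hT : ∀ x, (T x).verts = f ⁻¹' {x} ∧ (T x).coe.IsTree) :
    (⨆ x, T x).edgeSet.ncard + Fintype.card V' ≤ Fintype.card V := by
  calc (⨆ x, T x).edgeSet.ncard + Fintype.card V'
      ≤ ∑ x, ((T x).edgeSet.ncard + 1) := by
        rw [Finset.sum_add_distrib, Finset.sum_const, Finset.card_univ, smul_eq_mul, mul_one,
          Subgraph.edgeSet_iSup]
        gcongr
        exact Set.ncard_iUnion_le_of_fintype _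
    _ = ∑ x, (f ⁻¹' {x}).ncard := by
        simp only [Subgraph.ncard_edgeSet_add_one_of_isTree (hT _).2, (hT _).1]
    _ = Fintype.card V := by
        rw [← Nat.card_eq_fintype_card, ← Nat.card_congr (Equiv.sigmaFiberEquiv f),
          Nat.card_sigma]
        rfl

open Classical in
noncomputable def liftColoring (f : V → V') (F : G.Subgraph) (c' : Sym2 V' → α) (e : Sym2 V) :
    α ⊕ F.edgeSet :=
  if h : e ∈ F.edgeSet then .inr ⟨e, h⟩ else .inl (c' (e.map f))

theorem injOn_liftColoring {F : G.Subgraph} {c' : Sym2 V' → α} {s : Set (Sym2 V)}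
    (hf : Set.InjOn (Sym2.map f) (s \ F.edgeSet))
    (hc' : Set.InjOn c' (Sym2.map f '' (s \ F.edgeSet))) :
    Set.InjOn (liftColoring f F c') s := by
  intro e₁ he₁ e₂ he₂ h
  by_cases h₁ : e₁ ∈ F.edgeSet <;> by_cases h₂ : e₂ ∈ F.edgeSet <;>
    simp only [liftColoring, h₁, h₂, dite_true, dite_false, Sum.inr.injEq, Sum.inl.injEq,
      reduceCtorEq] at h
  · exact congrArg Subtype.val h
  · exact hf ⟨he₁, h₁⟩ ⟨he₂, h₂⟩
      (hc' (Set.mem_image_of_mem _ ⟨he₁, h₁⟩) (Set.mem_image_of_mem _ ⟨he₂, h₂⟩) h)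

variable (T : V' → G.Subgraph) (H' : G'.Subgraph) {a b : H'.edgeSet → V}

def liftSubgraph (hab : ∀ e, G.Adj (a e) (b e)) : G.Subgraph :=
  (⨆ x : H'.verts, T x) ⊔ ⨆ e, G.subgraphOfAdj (hab e)

variable {T H'} (hab : ∀ e, G.Adj (a e) (b e))

theorem verts_liftSubgraph (hmap : ∀ e, s(f (a e), f (b e)) = e)
    (hTverts : ∀ x, (T x).verts = f ⁻¹' {x}) :
    (liftSubgraph T H' hab).verts = f ⁻¹' H'.verts := by
  ext v
  simp only [liftSubgraph, Subgraph.verts_sup, Subgraph.verts_iSup, hTverts,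
    subgraphOfAdj_verts, Set.mem_union, Set.mem_iUnion, Set.mem_preimage,
    Set.mem_singleton_iff, Set.mem_insert_iff]
  refine ⟨?_, fun hv => .inl ⟨⟨f v, hv⟩, rfl⟩⟩
  rintro (⟨x, hx⟩ | ⟨e, rfl | rfl⟩)
  · exact hx ▸ x.2
  all_goals exact H'.mem_verts_of_mem_edge ((hmap e).symm ▸ e.2) (by simp)

theorem connected_liftSubgraph (hmap : ∀ e, s(f (a e), f (b e)) = e)
    (hTverts : ∀ x, (T x).verts = f ⁻¹' {x}) (hT : ∀ x, (T x).Connected)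
    (hH' : H'.Connected) : (liftSubgraph T H' hab).Connected := by
  set H := liftSubgraph T H' hab
  have hverts : H.verts = f ⁻¹' H'.verts := verts_liftSubgraph hab hmap hTverts
  have hTH (x : H'.verts) : T x ≤ H := (le_iSup (fun x : H'.verts => T x) x).trans le_sup_left
  have hlift (e : H'.edgeSet) : H.Adj (a e) (b e) :=
    ((le_iSup (fun e => G.subgraphOfAdj (hab e)) e).trans le_sup_right).2
      (subgraphOfAdj_adj_self _)
  have hfib (u v : H.verts) (huv : f u = f v) : H.coe.Reachable u v := by
    have hu : u.1 ∈ (T (f u)).verts := by rw [hTverts]; rfl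
    have hv : v.1 ∈ (T (f u)).verts := by rw [hTverts]; exact huv.symm
    exact ((hT (f u)).coe ⟨u, hu⟩ ⟨v, hv⟩).map
      (Subgraph.inclusion (hTH ⟨f u, hverts.subset u.2⟩))
  let g : H.verts → H'.verts := fun v => ⟨f v, hverts.subset v.2⟩
  refine Subgraph.connected_iff.mpr ⟨⟨Preconnected.of_quotient g
    (fun u v huv => hfib u v (congrArg Subtype.val huv)) ?_ hH'.preconnected.coe⟩, ?_⟩
  · rintro x y hxy
    let e : H'.edgeSet := ⟨s(x, y), hxy⟩
    have hreach : H.coe.Reachable ⟨a e, (hlift e).fst_mem⟩ ⟨b e, (hlift e).snd_mem⟩ :=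
      Adj.reachable (hlift e)
    rcases Sym2.eq_iff.mp (hmap e) with ⟨hx, hy⟩ | ⟨hy, hx⟩
    · exact ⟨_, _, Subtype.ext hx, Subtype.ext hy, hreach⟩
    · exact ⟨_, _, Subtype.ext hx, Subtype.ext hy, hreach.symm⟩
  · obtain ⟨x, hx⟩ := hH'.nonempty
    obtain ⟨v, hv⟩ := (hT x).nonempty
    rw [hTverts] at hv
    exact ⟨v, hverts.symm.subset (show f v ∈ H'.verts from hv.symm ▸ hx)⟩

theorem injOn_liftColoring_liftSubgraph (hmap : ∀ e, s(f (a e), f (b e)) = e)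
    {c' : Sym2 V' → α} (hc' : Set.InjOn c' H'.edgeSet) :
    Set.InjOn (liftColoring f (⨆ x, T x) c') (liftSubgraph T H' hab).edgeSet := by
  have hdiff : (liftSubgraph T H' hab).edgeSet \ (⨆ x, T x).edgeSet ⊆
      Set.range fun e => s(a e, b e) := by
    rintro e ⟨he, heT⟩
    rw [liftSubgraph, Subgraph.edgeSet_sup] at he
    rcases he with he | he
    · have hle : (⨆ x : H'.verts, T x) ≤ ⨆ x, T x := iSup_le fun x => le_iSup T x.1
      exact absurd (Subgraph.edgeSet_mono hle he) heT
    · rw [Subgraph.edgeSet_iSup, Set.mem_iUnion] at he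
      obtain ⟨e', he'⟩ := he
      exact ⟨e', by rwa [edgeSet_subgraphOfAdj, Set.mem_singleton_iff, eq_comm] at he'⟩
  have hmap' : Sym2.map f ∘ (fun e => s(a e, b e)) = Subtype.val := funext hmap
  refine injOn_liftColoring (Set.InjOn.mono hdiff ?_) (hc'.mono ?_)
  · rintro _ ⟨e₁, rfl⟩ _ ⟨e₂, rfl⟩ h
    rw [Subtype.ext ((hmap e₁).symm.trans (h.trans (hmap e₂)))]
  · refine (Set.image_mono hdiff).trans ?_
    rw [← Set.range_comp, hmap', Subtype.range_val]

theorem IsRainbowColoring.liftColoring [Fintype V] [Fintype V'] (hG' : G'.Connected)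
    (hlift : ∀ x y, G'.Adj x y → ∃ a b, f a = x ∧ f b = y ∧ G.Adj a b)
    {T : V' → G.Subgraph} (hT : ∀ x, (T x).verts = f ⁻¹' {x} ∧ (T x).coe.IsTree)
    {c' : Sym2 V' → α} (hc' : IsRainbowColoring G' c' 3) :
    IsRainbowColoring G (liftColoring f (⨆ x, T x) c') 3 := by
  classical
  refine isRainbowColoring_of_connected fun S hS => ?_
  obtain ⟨H', hSH', hH', hc'H'⟩ :=
    hc'.exists_connected_of_card_le_three hG' (Finset.card_image_le.trans hS.le)
  choose a b hab hmap using
    fun e : H'.edgeSet => exists_adj_map_eq hlift (H'.edgeSet_subset e.2)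
  refine ⟨liftSubgraph T H' hab, ?_,
    connected_liftSubgraph hab hmap (fun x => (hT x).1) (fun x => ⟨(hT x).2.connected⟩) hH',
    injOn_liftColoring_liftSubgraph hab hmap hc'H'⟩
  rw [verts_liftSubgraph hab hmap fun x => (hT x).1]
  exact fun v hv => hSH' (Finset.mem_coe.mpr (Finset.mem_image_of_mem f hv))

end Contraction

theorem stmt_9_general {V V' : Type*} [Fintype V] [Fintype V']
    (G : SimpleGraph V) (G' : SimpleGraph V') (hG' : G'.Connected)
    (f : V → V')
    (hfib : ∀ x : V', (G.induce (f ⁻¹' {x})).Connected)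
    (hadj : ∀ x y : V', G'.Adj x y ↔ x ≠ y ∧ ∃ a b : V, f a = x ∧ f b = y ∧ G.Adj a b) :
    rxk G 3 ≤ rxk G' 3 + (Fintype.card V - Fintype.card V') := by
  obtain ⟨c', hc'⟩ := hG'.exists_isRainbowColoring_rxk (k := 3)
  obtain ⟨T, hT⟩ := exists_fiber_trees hfib
  have hc := hc'.liftColoring hG' (fun x y h => ((hadj x y).mp h).2) hT
  have hforest := ncard_edgeSet_iSup_add_card_le hT
  calc rxk G 3 ≤ Nat.card (Fin (rxk G' 3) ⊕ (⨆ x, T x).edgeSet) := rxk_le_card hc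
    _ = rxk G' 3 + (⨆ x, T x).edgeSet.ncard := by
      rw [Nat.card_sum, Nat.card_eq_fintype_card, Fintype.card_fin, Nat.card_coe_set_eq]
    _ ≤ rxk G' 3 + (Fintype.card V - Fintype.card V') := by omega

theorem stmt_9 {V V' : Type*} [Fintype V] [Fintype V']
    (G : SimpleGraph V) (G' : SimpleGraph V') (hG : G.Connected) (hG' : G'.Connected)
    (f : V → V') (hsurj : Function.Surjective f)
    (hfib : ∀ x : V', (G.induce (f ⁻¹' {x})).Connected)
    (hadj : ∀ x y : V', G'.Adj x y ↔ x ≠ y ∧ ∃ a b : V, f a = x ∧ f b = y ∧ G.Adj a b) :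
    rxk G 3 ≤ rxk G' 3 + (Fintype.card V - Fintype.card V') :=
  stmt_9_general G G' hG' f hfib hadj
end
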